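/- arXiv:2011.08668 — 6 statements merged into one kernel-verified Lean document; each statement's English description precedes it below -/
import Mathlib

section
/- Fix a real number z ≥ 2. Then the sequence n ↦ S_n(z)/S_{n-1}(z) is strictly decreasing in n over the positive integers; that is, for all n ≥ 1, S_{n+1}(z)/S_n(z) < S_n(z)/S_{n-1}(z). -/
/-!
A solution of `S j = z S (j-1) - S (j-2)` satisfies the Cassini-type identity
`S (n+1) S (n-1) - S n ^ 2 = const`; with `S 0 = 1`, `S 1 = z` the constant is `-1`, so
`S (n+1) S (n-1) < S n ^ 2`. For `z ≥ 2` the sequence is positive on `n ≥ 0`, and clearing the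
(positive) denominators turns this inequality into the strict decrease of the ratios.
-/

section ThreeTermRecurrence

variable {R : Type*} {z : R} {S : ℤ → R}

theorem recurrence_shift [Sub R] [Mul R] (hrec : ∀ j : ℤ, S j = z * S (j - 1) - S (j - 2))
    (j : ℤ) : S (j + 2) = z * S (j + 1) - S j := by
  simpa [show j + 2 - 1 = j + 1 by ring] using hrec (j + 2)

theorem cassini_eq [CommRing R] (hrec : ∀ j : ℤ, S j = z * S (j - 1) - S (j - 2)) (n : ℤ) :
    S (n + 1) * S (n - 1) - S n ^ 2 = S 1 * S (-1) - S 0 ^ 2 := by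
  set D : ℤ → R := fun n => S (n + 1) * S (n - 1) - S n ^ 2
  have hD : Function.Periodic D 1 := by
    intro m
    have next := recurrence_shift hrec m
    have prev : S (m + 1) = z * S m - S (m - 1) := by
      simpa [show m + 1 - 2 = m - 1 by ring] using hrec (m + 1)
    simp only [D, show m + 1 + 1 = m + 2 by ring, add_sub_cancel_right]
    linear_combination S m * next - S (m + 1) * prev
  simpa [D] using hD.int_mul_eq n

variable [CommRing R] [LinearOrder R] [IsStrictOrderedRing R]

theorem pos_and_le_succ_of_two_le (hz : 2 ≤ z)
    (hrec : ∀ j : ℤ, S j = z * S (j - 1) - S (j - 2)) (h0 : 0 < S 0) (h01 : S 0 ≤ S 1) :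
    ∀ n : ℕ, 0 < S n ∧ S n ≤ S (n + 1)
  | 0 => ⟨h0, h01⟩
  | n + 1 => by
    obtain ⟨hn, hle⟩ := pos_and_le_succ_of_two_le hz hrec h0 h01 n
    have hpos : 0 < S (n + 1) := hn.trans_le hle
    have hz' : 2 * S (n + 1) ≤ z * S (n + 1) := mul_le_mul_of_nonneg_right hz hpos.le
    refine ⟨by exact_mod_cast hpos, ?_⟩
    push_cast
    rw [add_assoc, one_add_one_eq_two, recurrence_shift hrec]
    linarith

end ThreeTermRecurrence

/-- Fix `z ≥ 2`. Then `n ↦ S n z / S (n-1) z` is strictly decreasing over the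
positive integers: for `n ≥ 1`, `S (n+1) z / S n z < S n z / S (n-1) z`. -/
theorem chebyshev_ratio_strict_anti (z : ℝ) (hz : 2 ≤ z) (S : ℤ → ℝ)
    (h0 : S 0 = 1) (h1 : S 1 = z)
    (hrec : ∀ j : ℤ, S j = z * S (j - 1) - S (j - 2)) :
    ∀ n : ℤ, 1 ≤ n → S (n + 1) / S n < S n / S (n - 1) := by
  intro n hn
  obtain ⟨m, rfl⟩ : ∃ m : ℕ, n = m + 1 := ⟨(n - 1).toNat, by omega⟩
  have hpos := pos_and_le_succ_of_two_le hz hrec (by rw [h0]; exact one_pos)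
    (by rw [h0, h1]; linarith)
  have hSm : 0 < S m := (hpos m).1
  have hSm1 : 0 < S (m + 1) := by exact_mod_cast (hpos (m + 1)).1
  have hSneg : S (-1) = 0 := by
    have h := hrec 1
    norm_num [h0, h1] at h
    linarith
  have hcassini := cassini_eq hrec (m + 1)
  rw [add_sub_cancel_right, h1, h0, hSneg] at hcassini
  rw [add_sub_cancel_right, div_lt_div_iff₀ hSm1 hSm]
  linarith
end

section
/- Fix a positive integer n and define p(z) = S_n(z)/S_{n-1}(z) for z ∈ (2, ∞). Then p is a strictly increasing function of z on (2, ∞). -/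
/-! For `z > 2` the recurrence `S j = z S (j-1) - S (j-2)` makes `S j z` positive and increasing
in `j ≥ 0`, so the ratio `r m = S m z / S (m-1) z` is positive. The recurrence rewrites as
`r (m+1) = z - (r m)⁻¹`, and `z ↦ z - (r z)⁻¹` is strictly increasing whenever `r` is positive
and strictly increasing; induction on `m` starting from `r 1 = z` concludes. -/

open Set

lemma pos_and_le_succ_of_recurrence {u : ℤ → ℝ} {z : ℝ} (hz : 2 ≤ z) (h0 : 0 < u 0)
    (h01 : u 0 ≤ u 1) (hrec : ∀ j, 2 ≤ j → u j = z * u (j - 1) - u (j - 2)) {m : ℤ} (hm : 0 ≤ m) :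
    0 < u m ∧ u m ≤ u (m + 1) := by
  induction m, hm using Int.leInduction with
  | base => exact ⟨h0, h01⟩
  | succ k _ ih =>
    obtain ⟨hk_pos, hk_le⟩ := ih
    have hnext : u (k + 1 + 1) = z * u (k + 1) - u k := by
      rw [hrec (k + 1 + 1) (by omega)]; ring_nf
    refine ⟨hk_pos.trans_le hk_le, ?_⟩
    -- `u (k+2) - u (k+1) = (z - 2) u (k+1) + (u (k+1) - u k)`
    rw [hnext]; nlinarith

lemma StrictMonoOn.sub_inv {f : ℝ → ℝ} {s : Set ℝ} (hf : StrictMonoOn f s)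
    (hpos : ∀ z ∈ s, 0 < f z) : StrictMonoOn (fun z => z - (f z)⁻¹) s := by
  intro x hx y hy hxy
  have : (f y)⁻¹ < (f x)⁻¹ := (inv_lt_inv₀ (hpos y hy) (hpos x hx)).2 (hf hx hy hxy)
  dsimp only
  linarith

/-- Fix a positive integer `n`. Then `p(z) = S n z / S (n-1) z` is strictly
increasing on `(2, ∞)`. -/
theorem chebyshev_ratio_strictMonoOn (S : ℤ → ℝ → ℝ)
    (h0 : ∀ z : ℝ, S 0 z = 1) (h1 : ∀ z : ℝ, S 1 z = z)
    (hrec : ∀ (j : ℤ) (z : ℝ), S j z = z * S (j - 1) z - S (j - 2) z)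
    (n : ℤ) (hn : 1 ≤ n) :
    StrictMonoOn (fun z : ℝ => S n z / S (n - 1) z) (Set.Ioi 2) := by
  have hpos : ∀ m, 0 ≤ m → ∀ z ∈ Ioi (2 : ℝ), 0 < S m z := fun m hm z (hz : 2 < z) =>
    (pos_and_le_succ_of_recurrence hz.le (by simp [h0]) (by rw [h0, h1]; linarith)
      (fun j _ => hrec j z) hm).1
  induction n, hn using Int.leInduction with
  | base =>
    simp only [sub_self, h0, h1, div_one]
    exact strictMonoOn_id
  | succ m hm ih =>
    have hratio : EqOn (fun z => z - (S m z / S (m - 1) z)⁻¹)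
        (fun z => S (m + 1) z / S (m + 1 - 1) z) (Ioi 2) := by
      intro z hz
      have hm_ne : S m z ≠ 0 := (hpos m (by omega) z hz).ne'
      simp only [add_sub_cancel_right, inv_div]
      rw [hrec (m + 1) z, add_sub_cancel_right, show m + 1 - 2 = m - 1 by ring]
      field_simp
    exact (ih.sub_inv fun z hz =>
      div_pos (hpos m (by omega) z hz) (hpos (m - 1) (by omega) z hz)).congr hratio
end

section
/- Fix a positive integer n and define p(z) = S_n(z)/S_{n-1}(z) for z ∈ (2, ∞). Then the function z ↦ (z − 2)/(p(z) − 1) is strictly increasing on (2, ∞). -/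
/-- Fix a positive integer `n` and let `p(z) = S n z / S (n-1) z`. Then
`z ↦ (z - 2) / (p z - 1)` is strictly increasing on `(2, ∞)`. -/
theorem chebyshev_aux_strictMonoOn (S : ℤ → ℝ → ℝ)
    (h0 : ∀ z : ℝ, S 0 z = 1) (h1 : ∀ z : ℝ, S 1 z = z)
    (hrec : ∀ (j : ℤ) (z : ℝ), S j z = z * S (j - 1) z - S (j - 2) z)
    (n : ℤ) (hn : 1 ≤ n) :
    StrictMonoOn (fun z : ℝ => (z - 2) / (S n z / S (n - 1) z - 1)) (Set.Ioi 2) := by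
  have hrecN : ∀ (k : ℕ) (z : ℝ), S ((k : ℤ) + 2) z = z * S ((k : ℤ) + 1) z - S (k : ℤ) z := by
    intro k z
    have h := hrec ((k : ℤ) + 2) z
    rw [show ((k : ℤ) + 2) - 1 = (k : ℤ) + 1 by ring, show ((k : ℤ) + 2) - 2 = (k : ℤ) by ring] at h
    exact h
  -- main induction: positivity/monotonicity of S and strict mono of the ratio
  have key : ∀ k : ℕ, (∀ z ∈ Set.Ioi (2:ℝ), 0 < S (k : ℤ) z ∧ S (k : ℤ) z < S ((k:ℤ)+1) z) ∧
      StrictMonoOn (fun z : ℝ => S ((k:ℤ)+1) z / S (k:ℤ) z) (Set.Ioi 2) := by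
    intro k
    induction k with
    | zero =>
      constructor
      · intro z hz
        have hz2 : (2:ℝ) < z := hz
        norm_num [h0, h1]
        linarith
      · have : StrictMonoOn (fun z : ℝ => z) (Set.Ioi 2) := fun a _ b _ hab => hab
        refine this.congr ?_
        intro z hz
        norm_num [h0, h1]
    | succ k ih =>
      obtain ⟨ihp, ihm⟩ := ih
      have castsucc : ((k+1 : ℕ) : ℤ) = (k : ℤ) + 1 := by push_cast; ring
      have castsucc2 : ((k+1 : ℕ) : ℤ) + 1 = (k : ℤ) + 2 := by push_cast; ring
      have hp : ∀ z ∈ Set.Ioi (2:ℝ), 0 < S ((k:ℤ)+1) z ∧ S ((k:ℤ)+1) z < S ((k:ℤ)+2) z := by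
        intro z hz
        have hz2 : (2:ℝ) < z := hz
        obtain ⟨hp0, hlt⟩ := ihp z hz
        have hp1 : 0 < S ((k:ℤ)+1) z := lt_trans hp0 hlt
        refine ⟨hp1, ?_⟩
        rw [hrecN k z]
        nlinarith
      have e1 : ((k:ℤ)+1+1) = (k:ℤ)+2 := by ring
      constructor
      · intro z hz
        push_cast
        rw [e1]
        exact hp z hz
      · push_cast
        rw [e1]
        intro a ha b hb hab
        have ha2 : (2:ℝ) < a := ha
        have hb2 : (2:ℝ) < b := hb
        obtain ⟨hpa0, hlta⟩ := ihp a ha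
        obtain ⟨hpb0, hltb⟩ := ihp b hb
        have hpa1 : 0 < S ((k:ℤ)+1) a := lt_trans hpa0 hlta
        have hpb1 : 0 < S ((k:ℤ)+1) b := lt_trans hpb0 hltb
        have hrat : S ((k:ℤ)+1) a / S (k:ℤ) a < S ((k:ℤ)+1) b / S (k:ℤ) b := ihm ha hb hab
        have hcross : S ((k:ℤ)+1) a * S (k:ℤ) b < S ((k:ℤ)+1) b * S (k:ℤ) a :=
          (div_lt_div_iff₀ hpa0 hpb0).mp hrat
        have hinv : S (k:ℤ) b / S ((k:ℤ)+1) b < S (k:ℤ) a / S ((k:ℤ)+1) a := by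
          rw [div_lt_div_iff₀ hpb1 hpa1]
          nlinarith
        simp only
        rw [hrecN k a, hrecN k b]
        have hea : (a * S ((k:ℤ)+1) a - S (k:ℤ) a) / S ((k:ℤ)+1) a
            = a - S (k:ℤ) a / S ((k:ℤ)+1) a := by
          field_simp
        have heb : (b * S ((k:ℤ)+1) b - S (k:ℤ) b) / S ((k:ℤ)+1) b
            = b - S (k:ℤ) b / S ((k:ℤ)+1) b := by
          field_simp
        rw [hea, heb]
        linarith
  -- strict antitonicity of G k z = (S(k+1) - S k)/((z-2) S k)
  have gkey : ∀ k : ℕ,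
      StrictAntiOn (fun z : ℝ => (S ((k:ℤ)+1) z - S (k:ℤ) z) / ((z - 2) * S (k:ℤ) z))
        (Set.Ioi 2) := by
    intro k
    induction k with
    | zero =>
      intro a ha b hb hab
      have ha2 : (2:ℝ) < a := ha
      have hb2 : (2:ℝ) < b := hb
      simp only [Int.cast_zero]
      norm_num [h0, h1]
      rw [div_lt_div_iff₀ (by linarith) (by linarith)]
      nlinarith
    | succ k ih =>
      have castsucc : ((k+1 : ℕ) : ℤ) = (k : ℤ) + 1 := by push_cast; ring
      have castsucc2 : ((k+1 : ℕ) : ℤ) + 1 = (k : ℤ) + 2 := by push_cast; ring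
      have hval : ∀ z ∈ Set.Ioi (2:ℝ),
          (S ((k:ℤ)+2) z - S ((k:ℤ)+1) z) / ((z - 2) * S ((k:ℤ)+1) z)
          = 1 + ((S ((k:ℤ)+1) z - S (k:ℤ) z) / ((z - 2) * S (k:ℤ) z))
              * (S (k:ℤ) z / S ((k:ℤ)+1) z) := by
        intro z hz
        have hz2 : (2:ℝ) < z := hz
        obtain ⟨hp0, hlt⟩ := (key k).1 z hz
        have hp1 : 0 < S ((k:ℤ)+1) z := lt_trans hp0 hlt
        have h2 : z - 2 ≠ 0 := by linarith
        have hS : S (k:ℤ) z ≠ 0 := ne_of_gt hp0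
        have hS1 : S ((k:ℤ)+1) z ≠ 0 := ne_of_gt hp1
        rw [hrecN k z]
        field_simp
        ring
      intro a ha b hb hab
      have ha2 : (2:ℝ) < a := ha
      have hb2 : (2:ℝ) < b := hb
      obtain ⟨hpa0, hlta⟩ := (key k).1 a ha
      obtain ⟨hpb0, hltb⟩ := (key k).1 b hb
      have hpa1 : 0 < S ((k:ℤ)+1) a := lt_trans hpa0 hlta
      have hpb1 : 0 < S ((k:ℤ)+1) b := lt_trans hpb0 hltb
      have hGa : 0 < (S ((k:ℤ)+1) a - S (k:ℤ) a) / ((a - 2) * S (k:ℤ) a) :=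
        div_pos (by linarith) (mul_pos (by linarith) hpa0)
      have hGb : 0 < (S ((k:ℤ)+1) b - S (k:ℤ) b) / ((b - 2) * S (k:ℤ) b) :=
        div_pos (by linarith) (mul_pos (by linarith) hpb0)
      have hG : (S ((k:ℤ)+1) b - S (k:ℤ) b) / ((b - 2) * S (k:ℤ) b)
          < (S ((k:ℤ)+1) a - S (k:ℤ) a) / ((a - 2) * S (k:ℤ) a) := ih ha hb hab
      have hrat : S ((k:ℤ)+1) a / S (k:ℤ) a < S ((k:ℤ)+1) b / S (k:ℤ) b :=
        (key k).2 ha hb hab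
      have hqa : 0 < S (k:ℤ) a / S ((k:ℤ)+1) a := div_pos hpa0 hpa1
      have hqb : 0 < S (k:ℤ) b / S ((k:ℤ)+1) b := div_pos hpb0 hpb1
      have hq : S (k:ℤ) b / S ((k:ℤ)+1) b < S (k:ℤ) a / S ((k:ℤ)+1) a := by
        rw [div_lt_div_iff₀ hpb1 hpa1]
        have := (div_lt_div_iff₀ hpa0 hpb0).mp hrat
        nlinarith
      have e1 : ((k:ℤ)+1+1) = (k:ℤ)+2 := by ring
      push_cast
      rw [e1]
      rw [hval a ha, hval b hb]
      nlinarith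
  -- conclude
  obtain ⟨m, rfl⟩ : ∃ m : ℕ, n = (m : ℤ) + 1 := ⟨(n-1).toNat, by omega⟩
  have hsub : ((m : ℤ) + 1) - 1 = (m : ℤ) := by ring
  intro a ha b hb hab
  have ha2 : (2:ℝ) < a := ha
  have hb2 : (2:ℝ) < b := hb
  obtain ⟨hpa0, hlta⟩ := (key m).1 a ha
  obtain ⟨hpb0, hltb⟩ := (key m).1 b hb
  have hval : ∀ z ∈ Set.Ioi (2:ℝ), 0 < S (m:ℤ) z → S (m:ℤ) z < S ((m:ℤ)+1) z →
      (z - 2) / (S ((m:ℤ)+1) z / S (m:ℤ) z - 1)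
      = ((S ((m:ℤ)+1) z - S (m:ℤ) z) / ((z - 2) * S (m:ℤ) z))⁻¹ := by
    intro z hz hp0 hlt
    have hz2 : (2:ℝ) < z := hz
    have hne : S ((m:ℤ)+1) z - S (m:ℤ) z ≠ 0 := by linarith
    rw [show S ((m:ℤ)+1) z / S (m:ℤ) z - 1 = (S ((m:ℤ)+1) z - S (m:ℤ) z) / S (m:ℤ) z by
      field_simp]
    rw [div_div_eq_mul_div, inv_div]
  have hGa : 0 < (S ((m:ℤ)+1) a - S (m:ℤ) a) / ((a - 2) * S (m:ℤ) a) :=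
    div_pos (by linarith) (mul_pos (by linarith) hpa0)
  have hGb : 0 < (S ((m:ℤ)+1) b - S (m:ℤ) b) / ((b - 2) * S (m:ℤ) b) :=
    div_pos (by linarith) (mul_pos (by linarith) hpb0)
  have hG : (S ((m:ℤ)+1) b - S (m:ℤ) b) / ((b - 2) * S (m:ℤ) b)
      < (S ((m:ℤ)+1) a - S (m:ℤ) a) / ((a - 2) * S (m:ℤ) a) := gkey m ha hb hab
  simp only [hsub]
  rw [hval a ha hpa0 hlta, hval b hb hpb0 hltb]
  exact inv_strictAnti₀ hGb hG
end

section
/- For a positive integer n, the function g(s) = (s^{n+1} − s^{−(n+1)})/(s^n − s^{−n}) is strictly increasing on (1, ∞). -/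
/-!
Write `u k = s ^ k - s⁻¹ ^ k`. These satisfy the Chebyshev-type recurrence
`u (k + 2) = (s + s⁻¹) u (k + 1) - u k`, so the ratios `g n = u (n + 1) / u n` obey
`g (n + 1) = s + s⁻¹ - (g n)⁻¹`. Starting from `g 1 = s + s⁻¹`, induction shows that every
`g n` with `n ≥ 1` is positive and strictly increasing on `(1, ∞)`: `s + s⁻¹` is strictly
increasing there, and so is `-(g n)⁻¹` once `g n` is positive and strictly increasing.
-/

open Set

noncomputable def powSubInvPowRatio (n : ℕ) (s : ℝ) : ℝ :=
  (s ^ (n + 1) - s⁻¹ ^ (n + 1)) / (s ^ n - s⁻¹ ^ n)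

section Field

variable {𝕜 : Type*} [Field 𝕜]

lemma pow_sub_inv_pow_add_two {s : 𝕜} (hs : s ≠ 0) (k : ℕ) :
    s ^ (k + 2) - s⁻¹ ^ (k + 2) =
      (s + s⁻¹) * (s ^ (k + 1) - s⁻¹ ^ (k + 1)) - (s ^ k - s⁻¹ ^ k) := by
  simp only [inv_pow]
  field_simp
  ring

variable [LinearOrder 𝕜] [IsStrictOrderedRing 𝕜]

lemma pow_sub_inv_pow_pos {s : 𝕜} (hs : 1 < s) {k : ℕ} (hk : k ≠ 0) :
    0 < s ^ k - s⁻¹ ^ k := by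
  have h₁ : 1 < s ^ k := one_lt_pow₀ hs hk
  have h₂ : s⁻¹ ^ k < 1 := pow_lt_one₀ (by positivity) (inv_lt_one_of_one_lt₀ hs) hk
  linarith

lemma strictMonoOn_add_inv : StrictMonoOn (fun s : 𝕜 => s + s⁻¹) (Ioi 1) := by
  intro a (ha : 1 < a) b (hb : 1 < b) hab
  have hdiff : b + b⁻¹ - (a + a⁻¹) = (b - a) * (a * b - 1) / (a * b) := by
    field_simp
    ring
  have : 0 < (b - a) * (a * b - 1) / (a * b) := by
    have : 1 < a * b := one_lt_mul_of_lt_of_le ha hb.le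
    apply div_pos <;> nlinarith
  linarith

lemma StrictMonoOn.neg_inv {α : Type*} [Preorder α] {f : α → 𝕜} {t : Set α}
    (hf : StrictMonoOn f t) (hpos : ∀ x ∈ t, 0 < f x) : StrictMonoOn (fun x => -(f x)⁻¹) t :=
  fun _ ha _ hb hab => neg_lt_neg ((inv_lt_inv₀ (hpos _ hb) (hpos _ ha)).2 (hf ha hb hab))

end Field

lemma powSubInvPowRatio_pos {s : ℝ} (hs : 1 < s) {n : ℕ} (hn : n ≠ 0) :
    0 < powSubInvPowRatio n s :=
  div_pos (pow_sub_inv_pow_pos hs n.succ_ne_zero) (pow_sub_inv_pow_pos hs hn)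

-- The junk value `x / 0 = 0`; it makes `powSubInvPowRatio_succ` hold at `n = 0`.
lemma powSubInvPowRatio_zero (s : ℝ) : powSubInvPowRatio 0 s = 0 := by
  simp [powSubInvPowRatio]

lemma powSubInvPowRatio_succ {s : ℝ} (hs : 1 < s) (n : ℕ) :
    powSubInvPowRatio (n + 1) s = s + s⁻¹ - (powSubInvPowRatio n s)⁻¹ := by
  have hu : s ^ (n + 1) - s⁻¹ ^ (n + 1) ≠ 0 := (pow_sub_inv_pow_pos hs n.succ_ne_zero).ne'
  rw [powSubInvPowRatio, powSubInvPowRatio, inv_div, pow_sub_inv_pow_add_two (by positivity),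
    sub_div, mul_div_cancel_right₀ _ hu]

theorem strictMonoOn_powSubInvPowRatio {n : ℕ} (hn : n ≠ 0) :
    StrictMonoOn (powSubInvPowRatio n) (Ioi 1) := by
  induction n with
  | zero => exact absurd rfl hn
  | succ k ih =>
    have hg : MonotoneOn (fun s => -(powSubInvPowRatio k s)⁻¹) (Ioi 1) := by
      rcases eq_or_ne k 0 with rfl | hk
      · simpa [powSubInvPowRatio_zero] using monotoneOn_const
      · exact ((ih hk).neg_inv fun s hs => powSubInvPowRatio_pos hs hk).monotoneOn
    refine (strictMonoOn_add_inv.add_monotone hg).congr fun s hs => ?_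
    rw [powSubInvPowRatio_succ hs, sub_eq_add_neg]

/-- For a positive integer `n`, the function
`g(s) = (s^(n+1) - s⁻¹^(n+1)) / (s^n - s⁻¹^n)` is strictly increasing on `(1, ∞)`. -/
theorem g_strictMonoOn (n : ℕ) (hn : 0 < n) :
    StrictMonoOn (fun s : ℝ => (s ^ (n + 1) - s⁻¹ ^ (n + 1)) / (s ^ n - s⁻¹ ^ n))
      (Set.Ioi 1) :=
  strictMonoOn_powSubInvPowRatio hn.ne'
end

section
/- For a positive integer n, the function h(s) = −(s^{2n} + s)/(s^{2n+1} + 1) is strictly increasing on (1, ∞); equivalently, s ↦ (s^{2n} + s)/(s^{2n+1} + 1) is strictly decreasing on (1, ∞). -/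
open Set

/-- For `1 ≤ a < b` both summands on the right are positive: this cross-multiplied identity
is the whole monotonicity argument. -/
theorem pow_add_self_mul_pow_succ_add_one_sub {R : Type*} [CommRing R] (m : ℕ) (a b : R) :
    (a ^ m + a) * (b ^ (m + 1) + 1) - (b ^ m + b) * (a ^ (m + 1) + 1) =
      ((a * b) ^ m - 1) * (b - a) + (a * b - 1) * (b ^ m - a ^ m) := by
  ring

theorem strictAntiOn_pow_add_self_div_pow_succ_add_one {m : ℕ} (hm : m ≠ 0) :
    StrictAntiOn (fun s : ℝ => (s ^ m + s) / (s ^ (m + 1) + 1)) (Ici 1) := by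
  intro a (ha : 1 ≤ a) b (hb : 1 ≤ b) hab
  have hab_one : 1 < a * b := one_lt_mul_of_le_of_lt ha (ha.trans_lt hab)
  have hpow_ab : 1 < (a * b) ^ m := one_lt_pow₀ hab_one hm
  have hpow_lt : a ^ m < b ^ m := pow_lt_pow_left₀ hab (by linarith) hm
  rw [div_lt_div_iff₀ (by positivity) (by positivity), ← sub_pos,
    pow_add_self_mul_pow_succ_add_one_sub]
  exact add_pos (mul_pos (sub_pos.2 hpow_ab) (sub_pos.2 hab))
    (mul_pos (sub_pos.2 hab_one) (sub_pos.2 hpow_lt))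

/-- For a positive integer `n`, the function `h(s) = -((s^(2n) + s) / (s^(2n+1) + 1))`
is strictly increasing on `(1, ∞)`. -/
theorem h_strictMonoOn (n : ℕ) (hn : 0 < n) :
    StrictMonoOn (fun s : ℝ => -((s ^ (2 * n) + s) / (s ^ (2 * n + 1) + 1)))
      (Set.Ioi 1) :=
  ((strictAntiOn_pow_add_self_div_pow_succ_add_one (by positivity)).mono
    Ioi_subset_Ici_self).neg
end

section
/- Let r₁, r₂, r₃ be real numbers each greater than 2 satisfying r₁ + r₂ > r₃ + 2, r₂ + r₃ > r₁ + 2, and r₃ + r₁ > r₂ + 2. Then r₁r₂r₃ + 4 − r₁² − r₂² − r₃² > (r₁ − 2)(r₂ − 2)(r₃ − 2) > 0. -/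
/-- For reals `r₁, r₂, r₃ > 2` satisfying the shifted triangle inequalities,
`r₁r₂r₃ + 4 − r₁² − r₂² − r₃² > (r₁−2)(r₂−2)(r₃−2) > 0`. -/
theorem delta_gt (r₁ r₂ r₃ : ℝ)
    (h₁ : 2 < r₁) (h₂ : 2 < r₂) (h₃ : 2 < r₃)
    (t₁ : r₁ + r₂ > r₃ + 2) (t₂ : r₂ + r₃ > r₁ + 2) (t₃ : r₃ + r₁ > r₂ + 2) :
    r₁ * r₂ * r₃ + 4 - r₁ ^ 2 - r₂ ^ 2 - r₃ ^ 2 > (r₁ - 2) * (r₂ - 2) * (r₃ - 2) ∧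
      (r₁ - 2) * (r₂ - 2) * (r₃ - 2) > 0 := by
  constructor
  · nlinarith [mul_pos (sub_pos.2 h₁) (sub_pos.2 h₂), mul_pos (sub_pos.2 h₂) (sub_pos.2 h₃),
      mul_pos (sub_pos.2 h₃) (sub_pos.2 h₁),
      mul_pos (sub_pos.2 h₁) (sub_pos.2 t₂), mul_pos (sub_pos.2 h₂) (sub_pos.2 t₃),
      mul_pos (sub_pos.2 h₃) (sub_pos.2 t₁)]
  · exact mul_pos (mul_pos (sub_pos.2 h₁) (sub_pos.2 h₂)) (sub_pos.2 h₃)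
end
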